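/- Suppose σ = 0 and f : ℝ → ℝ is locally integrable with f ≥ 0 a.e. If for some s ∈ ℝ all iterates Φⁿ(s) of the firing map of the perfect integrator model are defined and the firing rate FR(s) = lim_{n→∞} n/Φⁿ(s) exists (possibly +∞), then the mean value M{f} = lim_{T→+∞}(1/T)∫_s^T f(u) du exists and equals FR(s). -/

import Mathlib

open MeasureTheory Filter Set intervalIntegral

noncomputable section

/-- A set `A ⊆ ℝ` is relatively dense. -/
def RelDense (A : Set ℝ) : Prop := ∃ l > 0, ∀ x : ℝ, ∃ τ ∈ A, x < τ ∧ τ < x + l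

/-- The set over which the infimum defining the LIF firing map is taken. -/
def FiringSet (σ : ℝ) (f : ℝ → ℝ) (t : ℝ) : Set ℝ :=
  {t' | t < t' ∧ Real.exp (σ * t) ≤ ∫ u in t..t', (f u - σ) * Real.exp (σ * u)}

/-- `y` is the firing-map value at `t`: the smallest `t' > t` with
`e^{σ t} = ∫_t^{t'} (f u - σ) e^{σ u} du`. -/
def FiringEq (σ : ℝ) (f : ℝ → ℝ) (t y : ℝ) : Prop :=
  IsLeast {t' | t < t' ∧ Real.exp (σ * t) = ∫ u in t..t', (f u - σ) * Real.exp (σ * u)} y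

/-- The Stepanov `S¹` seminorm. -/
def SNorm (f : ℝ → ℝ) : ℝ := ⨆ t : ℝ, ∫ u in t..(t + 1), |f u|

/-- Stepanov `S¹`-almost periodicity. -/
def S1AP (f : ℝ → ℝ) : Prop :=
  ∀ ε > 0, RelDense {τ | SNorm (fun u => f (u + τ) - f u) < ε}

/-- `D(η; f, g) = sup_u μ({t ∈ [u,u+1] : |f t - g t| ≥ η})`. -/
def Dfun (η : ℝ) (f g : ℝ → ℝ) : ℝ :=
  ⨆ u : ℝ, (volume {t ∈ Set.Icc u (u + 1) | η ≤ |f t - g t|}).toReal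

/-- Almost periodicity in the Lebesgue measure (μ-almost periodicity). -/
def MuAP (f : ℝ → ℝ) : Prop :=
  ∀ ε > 0, ∀ η > 0, RelDense {τ | Dfun η (fun t => f (t + τ)) f ≤ ε}

/-- Bohr (uniform) almost periodicity. -/
def BohrAP (g : ℝ → ℝ) : Prop :=
  Continuous g ∧ ∀ ε > 0, RelDense {τ | (⨆ t : ℝ, |g (t + τ) - g t|) < ε}

/-- Limit-periodicity: `g` is a uniform limit of continuous periodic functions. -/
def LimitPeriodic (g : ℝ → ℝ) : Prop :=
  ∃ gn : ℕ → ℝ → ℝ, (∀ n, Continuous (gn n) ∧ ∃ p > 0, Function.Periodic (gn n) p) ∧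
    TendstoUniformly gn g atTop

/-!
The primitive `F T = ∫_s^T f` is monotone because `f ≥ 0`, and the minimality in the firing map
forces `∫_{Φⁿ(s)}^{Φⁿ⁺¹(s)} f = 1` by the intermediate value theorem, so `F (Φⁿ(s)) = n`.
For `Φⁿ(s) ≤ T < Φⁿ⁺¹(s)` this squeezes `F T / T` between `n / Φⁿ⁺¹(s)` and `(n + 1) / Φⁿ(s)`,
both of which have the same limit as `n / Φⁿ(s)`.
-/

theorem Monotone.tendsto_atTop_of_tendsto_comp {ι α β : Type*} [LinearOrder α] [Preorder β]
    [NoMaxOrder β] {l : Filter ι} {F : α → β} {ϕ : ι → α} (hF : Monotone F)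
    (h : Tendsto (F ∘ ϕ) l atTop) : Tendsto ϕ l atTop :=
  tendsto_atTop.2 fun b =>
    (h.eventually_gt_atTop (F b)).mono fun _ hn => (hF.reflect_lt hn).le

theorem exists_index_tendsto_atTop_mem_Ico {α : Type*} [LinearOrder α] [NoMaxOrder α]
    {ϕ : ℕ → α} (hϕ : Monotone ϕ) (htop : Tendsto ϕ atTop atTop) :
    ∃ N : α → ℕ, Tendsto N atTop atTop ∧
      ∀ T, ϕ 0 ≤ T → T ∈ Ico (ϕ (N T)) (ϕ (N T + 1)) := by
  classical
  have hex : ∀ T, ∃ m, T < ϕ m := fun T => (htop.eventually_gt_atTop T).exists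
  have hfind : ∀ k T, ϕ k ≤ T → k < Nat.find (hex T) := fun k T hT => by
    by_contra! h
    exact (Nat.find_spec (hex T)).not_ge ((hϕ h).trans hT)
  refine ⟨fun T => Nat.find (hex T) - 1, ?_, fun T hT => ?_⟩
  · refine tendsto_atTop.2 fun k => (eventually_ge_atTop (ϕ k)).mono fun T hT => ?_
    have := hfind k T hT
    omega
  · have hpos := hfind 0 T hT
    refine ⟨not_lt.1 (Nat.find_min (hex T) (Nat.sub_one_lt_of_lt hpos)), ?_⟩
    rw [Nat.sub_add_cancel hpos]
    exact Nat.find_spec (hex T)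

section Ratio

variable {ϕ : ℕ → ℝ}

theorem tendsto_natCast_add_one_div (htop : Tendsto ϕ atTop atTop) {r : ℝ}
    (hr : Tendsto (fun n : ℕ => (n : ℝ) / ϕ n) atTop (nhds r)) :
    Tendsto (fun n : ℕ => ((n : ℝ) + 1) / ϕ n) atTop (nhds r) := by
  simpa [add_div] using hr.add htop.inv_tendsto_atTop

theorem natCast_div_succ_eq (n : ℕ) :
    (n : ℝ) / ϕ (n + 1) = ((n + 1 : ℕ) : ℝ) / ϕ (n + 1) - (ϕ (n + 1))⁻¹ := by
  push_cast
  ring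

theorem tendsto_natCast_div_succ (htop : Tendsto ϕ atTop atTop) {r : ℝ}
    (hr : Tendsto (fun n : ℕ => (n : ℝ) / ϕ n) atTop (nhds r)) :
    Tendsto (fun n : ℕ => (n : ℝ) / ϕ (n + 1)) atTop (nhds r) := by
  have hinv := (tendsto_add_atTop_iff_nat 1).2 htop.inv_tendsto_atTop
  simpa [natCast_div_succ_eq] using ((tendsto_add_atTop_iff_nat 1).2 hr).sub hinv

theorem tendsto_natCast_div_succ_atTop (htop : Tendsto ϕ atTop atTop)
    (hr : Tendsto (fun n : ℕ => (n : ℝ) / ϕ n) atTop atTop) :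
    Tendsto (fun n : ℕ => (n : ℝ) / ϕ (n + 1)) atTop atTop := by
  have hinv := (tendsto_add_atTop_iff_nat 1).2 htop.inv_tendsto_atTop
  simpa [natCast_div_succ_eq, sub_eq_add_neg] using
    ((tendsto_add_atTop_iff_nat 1).2 hr).atTop_add hinv.neg

variable {F : ℝ → ℝ} (hF : Monotone F) (hFϕ : ∀ n, F (ϕ n) = n)
include hF hFϕ

theorem tendsto_atTop_of_apply_eq_natCast : Tendsto ϕ atTop atTop :=
  hF.tendsto_atTop_of_tendsto_comp <| by
    simpa [Function.comp_def, hFϕ] using tendsto_natCast_atTop_atTop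

theorem div_bounds_of_mem_Ico {n : ℕ} {T : ℝ} (hn : 0 < ϕ n) (hT : T ∈ Ico (ϕ n) (ϕ (n + 1))) :
    (n : ℝ) / ϕ (n + 1) ≤ F T / T ∧ F T / T ≤ ((n : ℝ) + 1) / ϕ n := by
  have hlo : (n : ℝ) ≤ F T := hFϕ n ▸ hF hT.1
  have hhi : F T ≤ (n : ℝ) + 1 := by exact_mod_cast hFϕ (n + 1) ▸ hF hT.2.le
  have hTpos : 0 < T := hn.trans_le hT.1
  exact ⟨div_le_div₀ (hlo.trans' n.cast_nonneg) hlo hTpos hT.2.le,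
    div_le_div₀ (by positivity) hhi hn hT.1⟩

theorem exists_index_div_bounds :
    ∃ N : ℝ → ℕ, Tendsto N atTop atTop ∧ ∀ᶠ T in atTop,
      (N T : ℝ) / ϕ (N T + 1) ≤ F T / T ∧ F T / T ≤ ((N T : ℝ) + 1) / ϕ (N T) := by
  have htop := tendsto_atTop_of_apply_eq_natCast hF hFϕ
  have hmono : Monotone ϕ :=
    (strictMono_nat_of_lt_succ fun n => hF.reflect_lt (by simp [hFϕ])).monotone
  obtain ⟨N, hN, hIco⟩ := exists_index_tendsto_atTop_mem_Ico hmono htop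
  refine ⟨N, hN, ?_⟩
  filter_upwards [eventually_ge_atTop (ϕ 0), hN.eventually (htop.eventually_gt_atTop 0)]
    with T hT hpos
  exact div_bounds_of_mem_Ico hF hFϕ hpos (hIco T hT)

theorem tendsto_div_of_tendsto_natCast_div {r : ℝ}
    (hr : Tendsto (fun n : ℕ => (n : ℝ) / ϕ n) atTop (nhds r)) :
    Tendsto (fun T => F T / T) atTop (nhds r) := by
  have htop := tendsto_atTop_of_apply_eq_natCast hF hFϕ
  obtain ⟨N, hN, hbounds⟩ := exists_index_div_bounds hF hFϕ
  exact tendsto_of_tendsto_of_tendsto_of_le_of_le'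
    ((tendsto_natCast_div_succ htop hr).comp hN)
    ((tendsto_natCast_add_one_div htop hr).comp hN)
    (hbounds.mono fun _ h => h.1) (hbounds.mono fun _ h => h.2)

theorem tendsto_div_atTop_of_tendsto_natCast_div
    (hr : Tendsto (fun n : ℕ => (n : ℝ) / ϕ n) atTop atTop) :
    Tendsto (fun T => F T / T) atTop atTop := by
  have htop := tendsto_atTop_of_apply_eq_natCast hF hFϕ
  obtain ⟨N, hN, hbounds⟩ := exists_index_div_bounds hF hFϕ
  exact tendsto_atTop_mono' _ (hbounds.mono fun _ h => h.1)
    ((tendsto_natCast_div_succ_atTop htop hr).comp hN)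

end Ratio

theorem MeasureTheory.LocallyIntegrable.intervalIntegrable {E : Type*} [NormedAddCommGroup E]
    {μ : Measure ℝ} {f : ℝ → E} (hf : LocallyIntegrable f μ) (a b : ℝ) :
    IntervalIntegrable f μ a b :=
  (hf.integrableOn_isCompact isCompact_uIcc).intervalIntegrable

section Firing

variable {f : ℝ → ℝ} (hf : LocallyIntegrable f volume)
include hf

theorem intervalIntegral_eq_of_isLeast {a b c : ℝ} (hc : 0 < c)
    (h : IsLeast {t' | a < t' ∧ c ≤ ∫ u in a..t', f u} b) : ∫ u in a..b, f u = c := by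
  obtain ⟨⟨hab, hcb⟩, hmin⟩ := h
  refine hcb.antisymm' (not_lt.1 fun hlt => ?_)
  have hcont : ContinuousOn (fun y => ∫ u in a..y, f u) (Icc a b) :=
    (continuous_primitive (fun _ _ => hf.intervalIntegrable _ _) a).continuousOn
  obtain ⟨y, hy, hyc⟩ := intermediate_value_Ioo hab.le hcont (by simpa using ⟨hc, hlt⟩)
  exact (hmin ⟨hy.1, hyc.ge⟩).not_gt hy.2

theorem monotone_intervalIntegral_of_ae_nonneg (hpos : ∀ᵐ t, 0 ≤ f t) (s : ℝ) :
    Monotone fun T => ∫ u in s..T, f u := fun a b hab =>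
  sub_nonneg.1 <| by
    rw [integral_interval_sub_left (hf.intervalIntegrable _ _) (hf.intervalIntegrable _ _)]
    exact integral_nonneg_of_ae hab hpos

theorem intervalIntegral_iterate_eq_natCast {ϕ : ℕ → ℝ}
    (hiter : ∀ n, IsLeast {t' | ϕ n < t' ∧ 1 ≤ ∫ u in (ϕ n)..t', f u} (ϕ (n + 1))) (n : ℕ) :
    ∫ u in (ϕ 0)..(ϕ n), f u = n := by
  induction n with
  | zero => simp
  | succ n ih =>
    rw [← integral_add_adjacent_intervals (hf.intervalIntegrable _ _)
      (hf.intervalIntegrable _ _), ih, intervalIntegral_eq_of_isLeast hf one_pos (hiter n),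
      Nat.cast_succ]

end Firing

theorem stmt14 (f : ℝ → ℝ) (hf : LocallyIntegrable f volume) (hpos : ∀ᵐ t, 0 ≤ f t)
    (s : ℝ) (ϕ : ℕ → ℝ) (h0 : ϕ 0 = s)
    (hiter : ∀ n, IsLeast {t' | ϕ n < t' ∧ 1 ≤ ∫ u in (ϕ n)..t', f u} (ϕ (n + 1))) :
    (∀ r : ℝ, Tendsto (fun n : ℕ => (n : ℝ) / ϕ n) atTop (nhds r) →
      Tendsto (fun T => (1 / T) * ∫ u in s..T, f u) atTop (nhds r)) ∧
    (Tendsto (fun n : ℕ => (n : ℝ) / ϕ n) atTop atTop →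
      Tendsto (fun T => (1 / T) * ∫ u in s..T, f u) atTop atTop) := by
  have hF := monotone_intervalIntegral_of_ae_nonneg hf hpos s
  have hFϕ : ∀ n, ∫ u in s..ϕ n, f u = n := h0 ▸ intervalIntegral_iterate_eq_natCast hf hiter
  simp_rw [one_div, inv_mul_eq_div]
  exact ⟨fun r hr => tendsto_div_of_tendsto_natCast_div hF hFϕ hr,
    fun hr => tendsto_div_atTop_of_tendsto_natCast_div hF hFϕ hr⟩
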